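/- Let p be prime and m ∈ ℕ. The additive group of polyfunctions over ℤ/p^mℤ is isomorphic to the direct sum over k = 0, 1, ..., s(p^m)/p − 1 of p copies of ℤ/p^{m−e_p(pk)}ℤ, where e_p(j) is the exponent of p in j! and s is the Smarandache function. -/

import Mathlib

/-!
The falling factorials `D_k = X (X - 1) ⋯ (X - k + 1)` are monic of degree `k`, so their
functions generate all polyfunctions over `ℤ/nℤ`. Every value of `D_k` at an integer is divisible
by `k!`, so `c • D_k = 0` as a function whenever `c • k! = 0` in `ℤ/nℤ`; in particular `D_k = 0`
for `k ≥ s(n)`. Conversely, if `∑ c_k D_k` vanishes, evaluating it at `0, 1, 2, …` (a triangular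
system with diagonal `k!`) gives `c_k • k! = 0` for every `k`. Hence the polyfunctions form
`⨁_{k < s(n)} ℤ/ord(k!)ℤ`, and for `n = p^m` the additive order of `k!` is `p^(m - e_p(k))`.
Finally `p ∣ s(p^m)` and `e_p` is constant on each block `pk, …, pk + p - 1`, which groups the
summands into `p` equal copies.
-/

/-- The Smarandache function: the least `k` with `n ∣ k!`. -/
noncomputable def smarandache (n : ℕ) : ℕ := sInf {k : ℕ | n ∣ Nat.factorial k}

/-- The ring of polyfunctions over a commutative ring `R`. -/
noncomputable def polyfunRing (R : Type) [CommRing R] : Subring (R → R) :=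
  (Pi.ringHom (fun x : R => Polynomial.evalRingHom x)).range

/-- `e_p(k)`: the exponent of `p` in `k!`. -/
def ep (p k : ℕ) : ℕ := (Nat.factorial k).factorization p

open Polynomial Nat

namespace Polynomial

variable {R : Type*} [Ring R]

theorem mem_span_range_of_natDegree_le_of_coeff_eq_one {P : ℕ → R[X]}
    (hdeg : ∀ k, (P k).natDegree ≤ k) (hcoeff : ∀ k, (P k).coeff k = 1) (q : R[X]) :
    q ∈ Submodule.span R (Set.range P) := by
  suffices ∀ d, ∀ q : R[X], q.natDegree ≤ d → q ∈ Submodule.span R (Set.range P) from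
    this _ q le_rfl
  intro d
  induction d with
  | zero =>
    intro q hq
    have hP0 : P 0 = 1 := by rw [eq_C_of_natDegree_le_zero (hdeg 0), hcoeff, C_1]
    rw [eq_C_of_natDegree_le_zero hq, ← mul_one (C _), ← smul_eq_C_mul, ← hP0]
    exact Submodule.smul_mem _ _ (Submodule.subset_span ⟨0, rfl⟩)
  | succ d ih =>
    intro q hq
    have hlower : (q - q.coeff (d + 1) • P (d + 1)).natDegree ≤ d := by
      rw [natDegree_le_iff_coeff_eq_zero]
      intro N hN
      rw [coeff_sub, coeff_smul, smul_eq_mul]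
      rcases (succ_le_of_lt hN).eq_or_lt with rfl | hlt
      · rw [hcoeff, mul_one, sub_self]
      · rw [coeff_eq_zero_of_natDegree_lt (hq.trans_lt hlt),
          coeff_eq_zero_of_natDegree_lt ((hdeg _).trans_lt hlt), mul_zero, sub_zero]
    rw [← sub_add_cancel q (q.coeff (d + 1) • P (d + 1))]
    exact add_mem (ih _ hlower) (Submodule.smul_mem _ _ (Submodule.subset_span ⟨_, rfl⟩))

theorem descPochhammer_natDegree_le (k : ℕ) : (descPochhammer R k).natDegree ≤ k := by
  rw [← descPochhammer_map (Int.castRingHom R)]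
  exact natDegree_map_le.trans (descPochhammer_natDegree ℤ k).le

theorem descPochhammer_coeff_self (k : ℕ) : (descPochhammer R k).coeff k = 1 := by
  have h := (monic_descPochhammer ℤ k).coeff_natDegree
  rw [descPochhammer_natDegree] at h
  rw [← descPochhammer_map (Int.castRingHom R), coeff_map, h, map_one]

theorem span_range_descPochhammer : Submodule.span R (Set.range (descPochhammer R)) = ⊤ :=
  Submodule.eq_top_iff'.2 <|
    mem_span_range_of_natDegree_le_of_coeff_eq_one descPochhammer_natDegree_le
      descPochhammer_coeff_self

theorem zsmul_descPochhammer_eval_natCast_eq_zero {c : ℤ} {k : ℕ} (h : c • (k ! : R) = 0)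
    (N : ℕ) : c • (descPochhammer R k).eval (N : R) = 0 := by
  obtain ⟨t, ht⟩ := factorial_dvd_descFactorial N k
  rw [descPochhammer_eval_eq_descFactorial, ht, Nat.cast_mul, ← smul_mul_assoc, h, zero_mul]

theorem zsmul_factorial_eq_zero_of_sum_zsmul_descPochhammer_eval_eq_zero {N : ℕ} (c : Fin N → ℤ)
    (h : ∀ i : ℕ, ∑ j, c j • (descPochhammer R j).eval (i : R) = 0) (j : Fin N) :
    c j • ((j : ℕ)! : R) = 0 := by
  obtain ⟨j, hj⟩ := j
  induction j using Nat.strong_induction_on with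
  | _ j ih =>
    have hsum := h j
    rw [Finset.sum_eq_single ⟨j, hj⟩] at hsum
    · rwa [descPochhammer_eval_eq_descFactorial, descFactorial_self] at hsum
    · intro i _ hij
      rcases lt_or_gt_of_ne (Fin.val_ne_of_ne hij) with hlt | hgt
      · exact zsmul_descPochhammer_eval_natCast_eq_zero (ih i hlt i.isLt) j
      · rw [descPochhammer_eval_coe_nat_of_lt hgt, smul_zero]
    · simp

end Polynomial

theorem mem_polyfunRing_iff {R : Type} [CommRing R] {f : R → R} :
    f ∈ polyfunRing R ↔ ∃ q : R[X], q.eval = f :=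
  Iff.rfl

section ZMod

variable {n N : ℕ} [NeZero n]

theorem zsmul_descPochhammer_eval_eq_zero {c : ℤ} {k : ℕ} (h : c • (k ! : ZMod n) = 0) :
    c • (descPochhammer (ZMod n) k).eval = 0 := by
  funext x
  rw [Pi.smul_apply, ← ZMod.natCast_zmod_val x]
  exact zsmul_descPochhammer_eval_natCast_eq_zero h x.val

variable (n) in
noncomputable def descPochhammerEvalHom (j : ℕ) :
    ZMod (addOrderOf (j ! : ZMod n)) →+ (ZMod n → ZMod n) :=
  ZMod.lift _ ⟨zmultiplesHom _ (descPochhammer (ZMod n) j).eval, by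
    rw [zmultiplesHom_apply]
    exact zsmul_descPochhammer_eval_eq_zero (by rw [natCast_zsmul, addOrderOf_nsmul_eq_zero])⟩

theorem descPochhammerEvalHom_intCast (j : ℕ) (c : ℤ) :
    descPochhammerEvalHom n j c = c • (descPochhammer (ZMod n) j).eval :=
  ZMod.lift_coe _ _ _

variable (n N) in
noncomputable def descPochhammerSumHom :
    (∀ j : Fin N, ZMod (addOrderOf ((j : ℕ)! : ZMod n))) →+ (ZMod n → ZMod n) :=
  ∑ j : Fin N, (descPochhammerEvalHom n j).comp
    (Pi.evalAddMonoidHom (fun j : Fin N => ZMod (addOrderOf ((j : ℕ)! : ZMod n))) j)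

theorem descPochhammerSumHom_intCast (c : Fin N → ℤ) :
    descPochhammerSumHom n N (fun j => c j) = ∑ j, c j • (descPochhammer (ZMod n) j).eval := by
  simp only [descPochhammerSumHom, AddMonoidHom.finsetSum_apply, AddMonoidHom.comp_apply,
    Pi.evalAddMonoidHom_apply, descPochhammerEvalHom_intCast]

theorem descPochhammerSumHom_injective :
    Function.Injective (descPochhammerSumHom n N) := by
  refine (injective_iff_map_eq_zero _).2 fun a ha => ?_
  choose c hc using fun j => ZMod.intCast_surjective (a j)
  have hsum (i : ℕ) : ∑ j, c j • (descPochhammer (ZMod n) j).eval (i : ZMod n) = 0 := by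
    have := congrFun ha i
    rwa [← funext hc, descPochhammerSumHom_intCast, Finset.sum_apply] at this
  funext j
  rw [← hc j, Pi.zero_apply, ZMod.intCast_zmod_eq_zero_iff_dvd, addOrderOf_dvd_iff_zsmul_eq_zero]
  exact zsmul_factorial_eq_zero_of_sum_zsmul_descPochhammer_eval_eq_zero c hsum j

theorem descPochhammer_eval_mem_range (hN : n ∣ N !) (k : ℕ) :
    (descPochhammer (ZMod n) k).eval ∈ (descPochhammerSumHom n N).range := by
  by_cases hk : k < N
  · refine ⟨fun j => ((Pi.single (M := fun _ => ℤ) (⟨k, hk⟩ : Fin N) 1 j : ℤ) : ZMod _), ?_⟩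
    rw [descPochhammerSumHom_intCast, Finset.sum_eq_single ⟨k, hk⟩]
    · simp
    · intro j _ hj
      simp [Pi.single_eq_of_ne hj]
    · simp
  · have hk! : (k ! : ZMod n) = 0 := by
      rw [ZMod.natCast_eq_zero_iff]
      exact hN.trans (factorial_dvd_factorial (not_lt.1 hk))
    have := zsmul_descPochhammer_eval_eq_zero (c := 1) (by rw [hk!, smul_zero])
    rw [one_smul] at this
    rw [this]
    exact zero_mem _

theorem eval_mem_range_descPochhammerSumHom (hN : n ∣ N !) (q : (ZMod n)[X]) :
    q.eval ∈ (descPochhammerSumHom n N).range := by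
  induction span_range_descPochhammer.ge (Submodule.mem_top (x := q))
    using Submodule.span_induction with
  | mem _ h =>
    obtain ⟨k, rfl⟩ := h
    exact descPochhammer_eval_mem_range hN k
  | zero =>
    rw [show (0 : (ZMod n)[X]).eval = 0 from funext fun _ => eval_zero]
    exact zero_mem _
  | add p q _ _ hp hq =>
    rw [show (p + q).eval = p.eval + q.eval from funext fun _ => eval_add]
    exact add_mem hp hq
  | smul r q _ hq =>
    rw [show (r • q).eval = r.val • q.eval from
      funext fun _ => by
        rw [eval_smul, smul_eq_mul, Pi.smul_apply, nsmul_eq_mul, ZMod.natCast_zmod_val]]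
    exact nsmul_mem hq _

theorem range_descPochhammerSumHom (hN : n ∣ N !) :
    (descPochhammerSumHom n N).range = (polyfunRing (ZMod n)).toAddSubgroup := by
  ext f
  constructor
  · rintro ⟨a, rfl⟩
    choose c hc using fun j => ZMod.intCast_surjective (a j)
    rw [← funext hc, descPochhammerSumHom_intCast]
    exact sum_mem fun j _ => zsmul_mem (mem_polyfunRing_iff.2 ⟨descPochhammer _ j, rfl⟩) _
  · intro hf
    obtain ⟨q, rfl⟩ := mem_polyfunRing_iff.1 hf
    exact eval_mem_range_descPochhammerSumHom hN q

noncomputable def polyfunRingAddEquiv (hN : n ∣ N !) :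
    polyfunRing (ZMod n) ≃+ ∀ j : Fin N, ZMod (addOrderOf ((j : ℕ)! : ZMod n)) :=
  ((AddMonoidHom.ofInjective (descPochhammerSumHom_injective)).trans
    (AddEquiv.addSubgroupCongr (range_descPochhammerSumHom hN))).symm

end ZMod

theorem dvd_factorial_smarandache {n : ℕ} (hn : n ≠ 0) : n ∣ (smarandache n)! :=
  Nat.sInf_mem (s := {k | n ∣ k !}) ⟨n, dvd_factorial (pos_of_ne_zero hn) le_rfl⟩

theorem not_dvd_factorial_of_lt_smarandache {n k : ℕ} (h : k < smarandache n) : ¬ n ∣ k ! :=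
  Nat.notMem_of_lt_sInf h

theorem Nat.Prime.dvd_smarandache_pow {p : ℕ} (hp : p.Prime) (m : ℕ) :
    p ∣ smarandache (p ^ m) := by
  rcases hs : smarandache (p ^ m) with _ | s
  · exact dvd_zero p
  · by_contra hndvd
    have hdvd := dvd_factorial_smarandache (pow_ne_zero m hp.ne_zero)
    rw [hs, factorial_succ] at hdvd
    exact not_dvd_factorial_of_lt_smarandache (hs ▸ lt_add_one s)
      ((Coprime.pow_left m (hp.coprime_iff_not_dvd.2 hndvd)).dvd_of_dvd_mul_left hdvd)

theorem Nat.Prime.pow_div_gcd {p a : ℕ} (hp : p.Prime) (m : ℕ) (ha : a ≠ 0) :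
    p ^ m / (p ^ m).gcd a = p ^ (m - a.factorization p) := by
  obtain ⟨i, hi, hgcd⟩ := (Nat.dvd_prime_pow hp).1 (Nat.gcd_dvd_left (p ^ m) a)
  have hi' : min m (a.factorization p) = i := by
    simpa [Nat.factorization_gcd (pow_ne_zero m hp.ne_zero) ha, hp.factorization_pow] using
      congrArg (·.factorization p) hgcd
  rw [hgcd, Nat.pow_div hi hp.pos, ← hi']
  congr 1
  omega

theorem addOrderOf_factorial_cast_pow {p : ℕ} (hp : p.Prime) (m j : ℕ) :
    addOrderOf ((j ! : ℕ) : ZMod (p ^ m)) = p ^ (m - ep p j) := by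
  rw [ZMod.addOrderOf_coe _ (pow_ne_zero m hp.ne_zero), hp.pow_div_gcd m (factorial_ne_zero j), ep]

theorem ep_mul_add {p : ℕ} (k : ℕ) {i : ℕ} (hi : i < p) :
    ep p (p * k + i) = ep p (p * k) := by
  induction i with
  | zero => rfl
  | succ i ih =>
    have hndvd : ¬ p ∣ p * k + i + 1 := by
      rw [add_assoc, Nat.dvd_add_right (dvd_mul_right p k)]
      exact Nat.not_dvd_of_pos_of_lt i.succ_pos hi
    rw [← ih (by omega), ep, ep, ← add_assoc, factorial_succ,
      Nat.factorization_mul (succ_ne_zero _) (factorial_ne_zero _), Finsupp.add_apply,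
      Nat.factorization_eq_zero_of_not_dvd hndvd, zero_add]

theorem additive_group_of_polyfunctions_general (p : ℕ) (hp : p.Prime) (m : ℕ) :
    Nonempty ((polyfunRing (ZMod (p ^ m))) ≃+
      ∀ k : Fin (smarandache (p ^ m) / p),
        Fin p → ZMod (p ^ (m - ep p (p * (k : ℕ))))) := by
  have : NeZero (p ^ m) := ⟨pow_ne_zero m hp.ne_zero⟩
  set s := smarandache (p ^ m)
  let e : (Σ _ : Fin (s / p), Fin p) ≃ Fin s := (Equiv.sigmaEquivProd _ _).trans <|
    finProdFinEquiv.trans (finCongr (Nat.div_mul_cancel (hp.dvd_smarandache_pow m)))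
  have horder (k : Fin (s / p)) (i : Fin p) :
      addOrderOf (((e ⟨k, i⟩ : ℕ)! : ℕ) : ZMod (p ^ m)) = p ^ (m - ep p (p * k)) := by
    rw [addOrderOf_factorial_cast_pow hp, ← ep_mul_add k i.isLt, add_comm]
    rfl
  exact ⟨(polyfunRingAddEquiv (dvd_factorial_smarandache (NeZero.ne (p ^ m)))).trans <|
    (LinearEquiv.piCongrLeft ℤ _ e).symm.toAddEquiv.trans <|
    (LinearEquiv.piCurry ℤ _).toAddEquiv.trans <|
    AddEquiv.piCongrRight fun k => AddEquiv.piCongrRight fun i =>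
      (ZMod.ringEquivCongr (horder k i)).toAddEquiv⟩

/-- The additive group of polyfunctions over `ℤ/p^mℤ` is isomorphic to
`⨁_{k=0}^{s(p^m)/p - 1} p ⬝ ℤ/p^{m - e_p(pk)}ℤ`. -/
theorem additive_group_of_polyfunctions (p : ℕ) (hp : p.Prime) (m : ℕ)
    (hm : 0 < m) :
    Nonempty ((polyfunRing (ZMod (p ^ m))) ≃+
      ∀ k : Fin (smarandache (p ^ m) / p),
        Fin p → ZMod (p ^ (m - ep p (p * (k : ℕ))))) :=
  additive_group_of_polyfunctions_general p hp m
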